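/- For t > 0 define c_t = cosh(πt/4) + cosh(3πt/4) − coth(πt)·(sinh(πt/4) + sinh(3πt/4)). Then the series (4/π)·Σ_{k=0}^∞ cos((2k+1)π/4)·c_{2k+1} converges and its sum is strictly less than (2√2/π)·cosh(π/4)/cosh(π/2). -/

import Mathlib

open Real Filter Set Topology

/-- `c t = cosh(πt/4) + cosh(3πt/4) − coth(πt)·(sinh(πt/4) + sinh(3πt/4))`. -/
noncomputable def c (t : ℝ) : ℝ :=
  Real.cosh (π * t / 4) + Real.cosh (3 * π * t / 4) -
    (Real.cosh (π * t) / Real.sinh (π * t)) * (Real.sinh (π * t / 4) + Real.sinh (3 * π * t / 4))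

/-!
Sum-to-product formulas give `c t = cosh (π t / 4) / cosh (π t / 2)`, which lies between
`r ^ t / 2` and `2 r ^ t` for `r = exp (-π / 4)`, so the series converges geometrically. Its
`k = 0` term is exactly the right-hand side divided by `4 / π`. The `k = 1` and `k = 2` terms are
negative, and already the `k = 1` term, at most `-(√2 / 4) r ^ 3`, outweighs the tail `k ≥ 3`,
which is at most `3 r ^ 7 ≤ r ^ 3 / 3` since `r ^ 2 = exp (-π / 2) ≤ 1 / 3`.
-/

lemma Real.cosh_add_cosh_three_mul_sub_coth_mul {x : ℝ} (hx : x ≠ 0) :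
    cosh x + cosh (3 * x) - cosh (4 * x) / sinh (4 * x) * (sinh x + sinh (3 * x)) =
      cosh x / cosh (2 * x) := by
  have h1 : x = 2 * x - x := by ring
  have h3 : 3 * x = 2 * x + x := by ring
  have h4 : 4 * x = 2 * (2 * x) := by ring
  have hs : sinh (2 * x) ≠ 0 := sinh_ne_zero.mpr (by simpa using hx)
  have hc : cosh (2 * x) ≠ 0 := (cosh_pos _).ne'
  have hcosh : cosh x + cosh (3 * x) = 2 * cosh (2 * x) * cosh x := by
    nth_rw 1 [h1]; rw [h3, cosh_sub, cosh_add]; ring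
  have hsinh : sinh x + sinh (3 * x) = 2 * sinh (2 * x) * cosh x := by
    nth_rw 1 [h1]; rw [h3, sinh_sub, sinh_add]; ring
  rw [hcosh, hsinh, h4, sinh_two_mul (2 * x), cosh_two_mul (2 * x)]
  field_simp
  linear_combination cosh_sq_sub_sinh_sq (2 * x)

lemma Real.exp_le_two_mul_cosh (x : ℝ) : exp x ≤ 2 * cosh x := by
  rw [cosh_eq]; linarith [exp_pos (-x)]

lemma Real.cosh_le_exp_of_nonneg {x : ℝ} (hx : 0 ≤ x) : cosh x ≤ exp x := by
  rw [cosh_eq]; linarith [exp_le_exp.mpr (show -x ≤ x by linarith)]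

lemma Real.cosh_div_cosh_two_mul_le {x : ℝ} (hx : 0 ≤ x) :
    cosh x / cosh (2 * x) ≤ 2 * exp (-x) := by
  have h2x : exp (2 * x) = exp x * exp x := by rw [← exp_add]; ring_nf
  calc cosh x / cosh (2 * x) ≤ exp x / (exp (2 * x) / 2) :=
        div_le_div₀ (exp_pos x).le (cosh_le_exp_of_nonneg hx) (by positivity)
          (by linarith [exp_le_two_mul_cosh (2 * x)])
    _ = 2 * exp (-x) := by rw [exp_neg, h2x]; field_simp

lemma Real.exp_neg_div_two_le_cosh_div_cosh_two_mul {x : ℝ} (hx : 0 ≤ x) :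
    exp (-x) / 2 ≤ cosh x / cosh (2 * x) := by
  have h2x : exp (2 * x) = exp x * exp x := by rw [← exp_add]; ring_nf
  calc exp (-x) / 2 = (exp x / 2) / exp (2 * x) := by rw [exp_neg, h2x]; field_simp
    _ ≤ cosh x / cosh (2 * x) :=
        div_le_div₀ (cosh_pos x).le (by linarith [exp_le_two_mul_cosh x]) (cosh_pos _)
          (cosh_le_exp_of_nonneg (by linarith))

lemma c_eq_cosh_div_cosh {t : ℝ} (ht : t ≠ 0) :
    c t = cosh (π * t / 4) / cosh (π * t / 2) := by
  have h := cosh_add_cosh_three_mul_sub_coth_mul (x := π * t / 4) (by positivity)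
  rw [show 3 * (π * t / 4) = 3 * π * t / 4 by ring, show 4 * (π * t / 4) = π * t by ring,
    show 2 * (π * t / 4) = π * t / 2 by ring] at h
  exact h

lemma c_pos {t : ℝ} (ht : t ≠ 0) : 0 < c t := by
  rw [c_eq_cosh_div_cosh ht]; positivity

lemma exp_neg_pi_mul_natCast_div_four (n : ℕ) : exp (-(π * n / 4)) = exp (-(π / 4)) ^ n := by
  rw [← exp_nat_mul]; ring_nf

lemma c_natCast_le {n : ℕ} (hn : n ≠ 0) : c n ≤ 2 * exp (-(π / 4)) ^ n := by
  rw [c_eq_cosh_div_cosh (Nat.cast_ne_zero.mpr hn), ← exp_neg_pi_mul_natCast_div_four,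
    show π * n / 2 = 2 * (π * n / 4) by ring]
  exact cosh_div_cosh_two_mul_le (by positivity)

lemma le_c_natCast {n : ℕ} (hn : n ≠ 0) : exp (-(π / 4)) ^ n / 2 ≤ c n := by
  rw [c_eq_cosh_div_cosh (Nat.cast_ne_zero.mpr hn), ← exp_neg_pi_mul_natCast_div_four,
    show π * n / 2 = 2 * (π * n / 4) by ring]
  exact exp_neg_div_two_le_cosh_div_cosh_two_mul (by positivity)

lemma tsum_le_of_abs_le_geometric {f : ℕ → ℝ} {C q : ℝ} (hq₀ : 0 ≤ q) (hq₁ : q < 1)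
    (hf : ∀ n, |f n| ≤ C * q ^ n) : ∑' n, f n ≤ C * (1 - q)⁻¹ := by
  have hg : Summable fun n ↦ C * q ^ n := (summable_geometric_of_lt_one hq₀ hq₁).mul_left C
  calc ∑' n, f n ≤ ∑' n, C * q ^ n :=
        (hg.of_norm_bounded hf).tsum_le_tsum (fun n ↦ (le_abs_self _).trans (hf n)) hg
    _ = C * (1 - q)⁻¹ := by rw [tsum_mul_left, tsum_geometric_of_lt_one hq₀ hq₁]

lemma exp_neg_pi_div_four_sq_le : exp (-(π / 4)) ^ 2 ≤ 1 / 3 := by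
  have h := quadratic_le_exp_of_nonneg (x := π / 2) (by positivity)
  rw [← exp_nat_mul, show ((2 : ℕ) : ℝ) * -(π / 4) = -(π / 2) by push_cast; ring, exp_neg,
    inv_le_comm₀ (exp_pos _) (by norm_num)]
  nlinarith [pi_gt_three]

noncomputable def seriesTerm (k : ℕ) : ℝ := cos ((2 * k + 1) * π / 4) * c (2 * k + 1)

lemma seriesTerm_eq_c_natCast (k : ℕ) :
    seriesTerm k = cos ((2 * k + 1) * π / 4) * c ((2 * k + 1 : ℕ)) := by
  rw [seriesTerm]; push_cast; rfl

lemma abs_seriesTerm_le (k : ℕ) :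
    |seriesTerm k| ≤ 2 * exp (-(π / 4)) * (exp (-(π / 4)) ^ 2) ^ k := by
  rw [seriesTerm_eq_c_natCast, abs_mul, abs_of_pos (c_pos (by positivity))]
  calc |cos ((2 * k + 1) * π / 4)| * c ((2 * k + 1 : ℕ))
        ≤ 1 * (2 * exp (-(π / 4)) ^ (2 * k + 1)) :=
        mul_le_mul (abs_cos_le_one _) (c_natCast_le (by omega)) (c_pos (by positivity)).le
          zero_le_one
    _ = _ := by ring

lemma seriesTerm_zero : seriesTerm 0 = √2 / 2 * (cosh (π / 4) / cosh (π / 2)) := by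
  rw [seriesTerm, c_eq_cosh_div_cosh (by norm_num)]
  norm_num [cos_pi_div_four]

lemma seriesTerm_one_le : seriesTerm 1 ≤ -(√2 / 2) * (exp (-(π / 4)) ^ 3 / 2) := by
  have hcos : cos (3 * π / 4) = -(√2 / 2) := by
    rw [show 3 * π / 4 = π - π / 4 by ring, cos_pi_sub, cos_pi_div_four]
  rw [seriesTerm_eq_c_natCast]
  norm_num only [hcos]
  have := le_c_natCast (n := 3) (by norm_num)
  nlinarith [sqrt_nonneg 2]

lemma seriesTerm_two_nonpos : seriesTerm 2 ≤ 0 := by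
  rw [seriesTerm]
  refine mul_nonpos_of_nonpos_of_nonneg (cos_nonpos_of_pi_div_two_le_of_le ?_ ?_)
    (c_pos (by norm_num)).le <;> push_cast <;> linarith [pi_pos]

lemma summable_seriesTerm : Summable seriesTerm :=
  ((summable_geometric_of_lt_one (by positivity)
    (by linarith [exp_neg_pi_div_four_sq_le])).mul_left _).of_norm_bounded abs_seriesTerm_le

lemma tsum_seriesTerm_lt : ∑' k, seriesTerm k < seriesTerm 0 := by
  set r := exp (-(π / 4))
  have hr₀ : 0 < r := exp_pos _
  have hr₂ : r ^ 2 ≤ 1 / 3 := exp_neg_pi_div_four_sq_le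
  have htail : ∑' i, seriesTerm (i + 3) ≤ 2 * r ^ 7 * (1 - r ^ 2)⁻¹ :=
    tsum_le_of_abs_le_geometric (sq_nonneg r) (by linarith) fun i ↦
      (abs_seriesTerm_le (i + 3)).trans_eq (by ring)
  have hinv : (1 - r ^ 2)⁻¹ ≤ 3 / 2 := by
    rw [inv_le_comm₀ (by linarith) (by norm_num)]; linarith
  have hsqrt : 4 / 3 < √2 := by rw [lt_sqrt (by norm_num)]; norm_num
  have htail' : ∑' i, seriesTerm (i + 3) ≤ r ^ 3 / 3 := by
    calc ∑' i, seriesTerm (i + 3) ≤ 2 * r ^ 7 * (3 / 2) :=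
          htail.trans (mul_le_mul_of_nonneg_left hinv (by positivity))
      _ = 3 * r ^ 3 * (r ^ 2) ^ 2 := by ring
      _ ≤ 3 * r ^ 3 * (1 / 3) ^ 2 := by gcongr
      _ = r ^ 3 / 3 := by ring
  rw [← summable_seriesTerm.sum_add_tsum_nat_add 3, Finset.sum_range_succ, Finset.sum_range_succ,
    Finset.sum_range_one]
  nlinarith [seriesTerm_one_le, seriesTerm_two_nonpos, pow_pos hr₀ 3]

theorem stmt9 :
    Summable (fun k : ℕ => Real.cos ((2 * k + 1) * π / 4) * c (2 * k + 1)) ∧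
    (4 / π) * ∑' k : ℕ, Real.cos ((2 * k + 1) * π / 4) * c (2 * k + 1) <
      (2 * Real.sqrt 2 / π) * Real.cosh (π / 4) / Real.cosh (π / 2) := by
  refine ⟨summable_seriesTerm, ?_⟩
  calc 4 / π * ∑' k, seriesTerm k < 4 / π * seriesTerm 0 :=
        mul_lt_mul_of_pos_left tsum_seriesTerm_lt (by positivity)
    _ = 2 * √2 / π * cosh (π / 4) / cosh (π / 2) := by rw [seriesTerm_zero]; ring
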